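/- On ℝ^4 with coordinates (x, y, y1, y2), consider the vector field X = x^2*∂_x - 2*x*∂_y + (-2 - 2*x*y1)*∂_{y1} + (-2*y1 - 4*x*y2)*∂_{y2}. Then X annihilates the function I = (2*y2 - y1^2)*e^{-2*y}, i.e., X(I) = 0. -/

import Mathlib

/-!
`I` is the product of `J = 2y₂ − y₁²` and `E = e^{−2y}`. Along `X` both factors are relative
invariants with opposite weights: `X(J) = −4x·J` and `X(E) = 4x·E`, so by the Leibniz rule
`X(I) = X(J)·E + J·X(E) = 0`.
-/

namespace Stmt11

/-- Points of `ℝ⁴` with coordinates `(x, y, y1, y2)`. -/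
abbrev Pt := Fin 4 → ℝ

/-- The second prolongation of the point field `x²∂_x − 2x∂_y`:
`X = x²∂_x − 2x∂_y + (−2 − 2x y₁)∂_{y1} + (−2y₁ − 4x y₂)∂_{y2}`. -/
def X : Pt → Pt := fun p =>
  ![(p 0) ^ 2, -2 * p 0, -2 - 2 * p 0 * p 2, -2 * p 2 - 4 * p 0 * p 3]

/-- The absolute differential invariant `I = (2y₂ − y₁²) e^{−2y}`. -/
noncomputable def I : Pt → ℝ := fun p => (2 * p 3 - (p 2) ^ 2) * Real.exp (-2 * p 1)

open Real

def relInvariant (p : Pt) : ℝ := 2 * p 3 - p 2 ^ 2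

noncomputable def expFactor (p : Pt) : ℝ := exp (-2 * p 1)

theorem I_eq_relInvariant_mul_expFactor : I = relInvariant * expFactor := rfl

theorem differentiable_relInvariant : Differentiable ℝ relInvariant := by
  unfold relInvariant
  fun_prop

theorem differentiable_expFactor : Differentiable ℝ expFactor := by
  unfold expFactor
  fun_prop

theorem fderiv_relInvariant_apply (p v : Pt) :
    fderiv ℝ relInvariant p v = 2 * v 3 - 2 * p 2 * v 2 := by
  have h : HasFDerivAt relInvariant _ p :=
    ((hasFDerivAt_apply (𝕜 := ℝ) 3 p).const_mul (2 : ℝ)).sub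
      ((hasFDerivAt_apply (𝕜 := ℝ) 2 p).pow 2)
  rw [h.fderiv]
  simp

theorem fderiv_expFactor_apply (p v : Pt) :
    fderiv ℝ expFactor p v = -2 * v 1 * expFactor p := by
  unfold expFactor
  rw [(((hasFDerivAt_apply (𝕜 := ℝ) 1 p).const_mul (-2 : ℝ)).exp).fderiv]
  simp
  ring

theorem fderiv_relInvariant_X (p : Pt) :
    fderiv ℝ relInvariant p (X p) = -4 * p 0 * relInvariant p := by
  rw [fderiv_relInvariant_apply]
  simp only [X, Matrix.cons_val, relInvariant]
  ring

theorem fderiv_expFactor_X (p : Pt) :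
    fderiv ℝ expFactor p (X p) = 4 * p 0 * expFactor p := by
  rw [fderiv_expFactor_apply]
  simp only [X, Matrix.cons_val_one, Matrix.cons_val_zero]
  ring

/-- `X` annihilates the invariant `I = (2y₂ − y₁²) e^{−2y}`. -/
theorem X_annihilates_I (p : Pt) : fderiv ℝ I p (X p) = 0 := by
  rw [I_eq_relInvariant_mul_expFactor,
    fderiv_mul (differentiable_relInvariant p) (differentiable_expFactor p)]
  simp only [add_apply, smul_apply, smul_eq_mul, fderiv_relInvariant_X, fderiv_expFactor_X]
  ring

end Stmt11
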